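/- Let B₁,…,B_m be symmetric real n×n matrices that are pairwise orthogonal with respect to the Frobenius inner product, i.e., ⟨B_α,B_β⟩ = ‖B_α‖² δ_{αβ}. Assuming the Li–Li inequality Σ_{α,β}‖[B_α,B_β]‖² + Σ_{α,β}⟨B_α,B_β⟩² ≤ (3/2)(Σ_α‖B_α‖²)² and the Chern–do Carmo–Kobayashi inequality ‖[B_α,B_β]‖² ≤ 2‖B_α‖²‖B_β‖², one has Σ_{α,β=1}^m ‖[B_α,B_β]‖² ≤ (3(m-1)/(2m-1)) (Σ_{α=1}^m ‖B_α‖²)² for m ≥ 2. -/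

import Mathlib

/-! Orthogonality collapses the Gram term of the Li–Li inequality to `∑ ‖B_α‖⁴`, which by
Cauchy–Schwarz is at least `(∑ ‖B_α‖²)² / m`. Hence the commutator sum is at most
`(3/2 - 1/m) (∑ ‖B_α‖²)²`, and `3/2 - 1/m ≤ 3(m-1)/(2m-1)` as soon as `m ≥ 2`. -/

open Matrix Finset

noncomputable def frobInner {n : ℕ} (A B : Matrix (Fin n) (Fin n) ℝ) : ℝ :=
  (Aᵀ * B).trace

noncomputable def frobSq {n : ℕ} (A : Matrix (Fin n) (Fin n) ℝ) : ℝ :=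
  frobInner A A

def mcomm {n : ℕ} (A B : Matrix (Fin n) (Fin n) ℝ) : Matrix (Fin n) (Fin n) ℝ :=
  A * B - B * A

lemma sum_sum_sq_frobInner_of_orthogonal {ι : Type*} [Fintype ι] [DecidableEq ι] {n : ℕ}
    (B : ι → Matrix (Fin n) (Fin n) ℝ)
    (horth : ∀ α β, frobInner (B α) (B β) = if α = β then frobSq (B α) else 0) :
    ∑ α, ∑ β, frobInner (B α) (B β) ^ 2 = ∑ α, frobSq (B α) ^ 2 := by
  simp [horth]

lemma three_halves_sub_inv_le {x : ℝ} (hx : 2 ≤ x) :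
    3 / 2 - 1 / x ≤ 3 * (x - 1) / (2 * x - 1) := by
  rw [div_sub_div _ _ two_ne_zero (by positivity), div_le_div_iff₀ (by positivity) (by linarith)]
  nlinarith

theorem weak_ddvv_step_general {n m : ℕ} (hm : 2 ≤ m) (B : Fin m → Matrix (Fin n) (Fin n) ℝ)
    (horth : ∀ α β, frobInner (B α) (B β) = if α = β then frobSq (B α) else 0)
    (hLiLi : (∑ α, ∑ β, frobSq (mcomm (B α) (B β))) +
      (∑ α, ∑ β, (frobInner (B α) (B β)) ^ 2) ≤ (3 / 2) * (∑ α, frobSq (B α)) ^ 2) :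
    ∑ α, ∑ β, frobSq (mcomm (B α) (B β)) ≤
      (3 * ((m : ℝ) - 1) / (2 * (m : ℝ) - 1)) * (∑ α, frobSq (B α)) ^ 2 := by
  set S := ∑ α, frobSq (B α)
  have hm' : (2 : ℝ) ≤ m := by exact_mod_cast hm
  rw [sum_sum_sq_frobInner_of_orthogonal B horth] at hLiLi
  have hCS : S ^ 2 / m ≤ ∑ α, frobSq (B α) ^ 2 := by
    rw [div_le_iff₀ (by positivity), mul_comm]
    simpa using sq_sum_le_card_mul_sum_sq (s := univ) (f := fun α => frobSq (B α))
  calc ∑ α, ∑ β, frobSq (mcomm (B α) (B β))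
      ≤ (3 / 2 - 1 / (m : ℝ)) * S ^ 2 := by linarith [div_eq_mul_one_div (S ^ 2) (m : ℝ)]
    _ ≤ _ := mul_le_mul_of_nonneg_right (three_halves_sub_inv_le hm') (sq_nonneg S)

theorem weak_ddvv_step {n m : ℕ} (hm : 2 ≤ m) (B : Fin m → Matrix (Fin n) (Fin n) ℝ)
    (hsymm : ∀ α, (B α).IsSymm)
    (horth : ∀ α β, frobInner (B α) (B β) = if α = β then frobSq (B α) else 0)
    (hLiLi : (∑ α, ∑ β, frobSq (mcomm (B α) (B β))) +
      (∑ α, ∑ β, (frobInner (B α) (B β)) ^ 2) ≤ (3 / 2) * (∑ α, frobSq (B α)) ^ 2)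
    (hCdCK : ∀ α β, frobSq (mcomm (B α) (B β)) ≤ 2 * frobSq (B α) * frobSq (B β)) :
    ∑ α, ∑ β, frobSq (mcomm (B α) (B β)) ≤
      (3 * ((m : ℝ) - 1) / (2 * (m : ℝ) - 1)) * (∑ α, frobSq (B α)) ^ 2 :=
  weak_ddvv_step_general hm B horth hLiLi
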